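/- arXiv:1504.04859 — 4 statements merged into one kernel-verified Lean document; each statement's English description precedes it below -/
import Mathlib

section
/- If (a,b) is the Stern-Brocot encoding of a binary string of length n, then max(a,b) ≤ F_{n+2}, where F denotes the Fibonacci sequence with F_1 = F_2 = 1. -/
open Matrix

def sbEncode (w : List Bool) : Fin 2 → ℤ :=
  w.foldl (fun v b => Matrix.vecMul v (if b then !![1, 0; 1, 1] else !![1, 1; 0, 1]))
    ![1, 1]

lemma vecMul_false (v : Fin 2 → ℤ) :
    Matrix.vecMul v (!![1, 1; 0, 1] : Matrix (Fin 2) (Fin 2) ℤ) = ![v 0, v 0 + v 1] := by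
  funext i
  fin_cases i <;>
    simp [Matrix.vecMul, dotProduct, Fin.sum_univ_two]

lemma vecMul_true (v : Fin 2 → ℤ) :
    Matrix.vecMul v (!![1, 0; 1, 1] : Matrix (Fin 2) (Fin 2) ℤ) = ![v 0 + v 1, v 1] := by
  funext i
  fin_cases i <;>
    simp [Matrix.vecMul, dotProduct, Fin.sum_univ_two]

lemma sb_aux : ∀ (w : List Bool) (a b : ℤ) (k : ℕ), 0 ≤ a → 0 ≤ b →
    max a b ≤ (Nat.fib (k + 2) : ℤ) → a + b ≤ (Nat.fib (k + 3) : ℤ) →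
    (0 ≤ (w.foldl (fun v c => Matrix.vecMul v (if c then !![1, 0; 1, 1] else !![1, 1; 0, 1])) ![a, b]) 0) ∧
    (0 ≤ (w.foldl (fun v c => Matrix.vecMul v (if c then !![1, 0; 1, 1] else !![1, 1; 0, 1])) ![a, b]) 1) ∧
    max ((w.foldl (fun v c => Matrix.vecMul v (if c then !![1, 0; 1, 1] else !![1, 1; 0, 1])) ![a, b]) 0)
        ((w.foldl (fun v c => Matrix.vecMul v (if c then !![1, 0; 1, 1] else !![1, 1; 0, 1])) ![a, b]) 1)
      ≤ (Nat.fib (w.length + k + 2) : ℤ) := by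
  intro w
  induction w with
  | nil =>
    intro a b k ha hb hmax hsum
    refine ⟨ha, hb, ?_⟩
    simpa using hmax
  | cons c ws ih =>
    intro a b k ha hb hmax hsum
    have hfib : (Nat.fib (k + 2) : ℤ) + (Nat.fib (k + 3) : ℤ) = (Nat.fib (k + 4) : ℤ) := by
      have := Nat.fib_add_two (n := k + 2)
      push_cast [this]
      ring
    cases c with
    | false =>
      have h := ih a (a + b) (k + 1) ha (by linarith)
        (by
          have : max a (a + b) = a + b := max_eq_right (by linarith)
          rw [this]; simpa using hsum)
        (by
          have h1 : a ≤ max a b := le_max_left a b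
          have : a + (a + b) ≤ (Nat.fib (k + 2) : ℤ) + (Nat.fib (k + 3) : ℤ) := by linarith
          simpa [hfib, show k + 1 + 3 = k + 4 from rfl] using this)
      simp only [List.foldl_cons, if_false, Bool.false_eq_true, vecMul_false] at *
      simp only [Matrix.cons_val_zero, Matrix.cons_val_one, Matrix.head_cons] at h ⊢
      refine ⟨h.1, h.2.1, ?_⟩
      have := h.2.2
      have hl : ws.length + (k + 1) + 2 = ws.length + 1 + k + 2 := by ring
      rw [hl] at this
      simpa using this
    | true =>
      have h := ih (a + b) b (k + 1) (by linarith) hb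
        (by
          have : max (a + b) b = a + b := max_eq_left (by linarith)
          rw [this]; simpa using hsum)
        (by
          have h1 : b ≤ max a b := le_max_right a b
          have : (a + b) + b ≤ (Nat.fib (k + 2) : ℤ) + (Nat.fib (k + 3) : ℤ) := by linarith
          simpa [hfib, show k + 1 + 3 = k + 4 from rfl] using this)
      simp only [List.foldl_cons, if_true, vecMul_true] at *
      simp only [Matrix.cons_val_zero, Matrix.cons_val_one, Matrix.head_cons] at h ⊢
      refine ⟨h.1, h.2.1, ?_⟩
      have := h.2.2
      have hl : ws.length + (k + 1) + 2 = ws.length + 1 + k + 2 := by ring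
      rw [hl] at this
      simpa using this

theorem sbEncode_le_fib (w : List Bool) :
    max (sbEncode w 0) (sbEncode w 1) ≤ (Nat.fib (w.length + 2) : ℤ) := by
  have h := sb_aux w 1 1 0 (by norm_num) (by norm_num) (by norm_num [Nat.fib]) (by norm_num [Nat.fib])
  simpa [sbEncode] using h.2.2
end

section
/- If (a,b) is the Stern-Brocot encoding of a nonempty binary string w, then a ≠ b; moreover the last symbol of w equals 0 if and only if b > a. -/
open Matrix

lemma sbEncode_append_singleton (w : List Bool) (b : Bool) (k : Fin 2) :
    sbEncode (w ++ [b]) k =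
      (Matrix.vecMul (sbEncode w) (if b then !![1, 0; 1, 1] else !![1, 1; 0, 1])) k := by
  simp [sbEncode, List.foldl_append]

lemma sbEncode_pos (w : List Bool) : 0 < sbEncode w 0 ∧ 0 < sbEncode w 1 := by
  induction w using List.reverseRecOn with
  | nil => simp [sbEncode]
  | append_singleton w b ih =>
    obtain ⟨h0, h1⟩ := ih
    rw [sbEncode_append_singleton, sbEncode_append_singleton]
    cases b <;>
      simp [Matrix.vecMul, dotProduct, Fin.sum_univ_two] <;> constructor <;> linarith

theorem sbEncode_last_symbol (w : List Bool) (hw : w ≠ []) :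
    sbEncode w 0 ≠ sbEncode w 1 ∧
    (w.getLast hw = false ↔ sbEncode w 0 < sbEncode w 1) := by
  induction w using List.reverseRecOn with
  | nil => exact absurd rfl hw
  | append_singleton w b ih =>
    obtain ⟨h0, h1⟩ := sbEncode_pos w
    rw [sbEncode_append_singleton, sbEncode_append_singleton, List.getLast_append]
    cases b <;>
      simp [Matrix.vecMul, dotProduct, Fin.sum_univ_two] <;> omega
end

section
/- If v is the generalized Stern-Brocot encoding of a nonempty string over a k-letter alphabet whose last symbol is a_j, then all entries of v are positive integers and the j-th entry of v is strictly greater than every other entry (in particular, v has a unique maximum entry). -/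
open Matrix

def gsbMat {k : ℕ} (j : Fin k) : Matrix (Fin k) (Fin k) ℤ :=
  fun i i' => if i' = j then 1 else if i = i' then 1 else 0

def gsbEncode {k : ℕ} (w : List (Fin k)) : Fin k → ℤ :=
  w.foldl (fun v j => Matrix.vecMul v (gsbMat j)) (fun _ => 1)

lemma gsb_step {k : ℕ} (v : Fin k → ℤ) (j i : Fin k) :
    Matrix.vecMul v (gsbMat j) i = if i = j then ∑ t, v t else v i := by
  simp only [Matrix.vecMul, dotProduct, gsbMat]
  by_cases h : i = j
  · simp [h]
  · simp only [h, if_false]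
    rw [Finset.sum_congr rfl (fun t _ => by rw [mul_ite, mul_one, mul_zero])]
    simp

lemma gsbEncode_append {k : ℕ} (w : List (Fin k)) (j : Fin k) :
    gsbEncode (w ++ [j]) = Matrix.vecMul (gsbEncode w) (gsbMat j) := by
  simp [gsbEncode, List.foldl_append]

lemma gsbEncode_pos {k : ℕ} (w : List (Fin k)) : ∀ i, 1 ≤ gsbEncode w i := by
  induction w using List.reverseRecOn with
  | nil => intro i; simp [gsbEncode]
  | append_singleton w j ih =>
      intro i
      rw [gsbEncode_append, gsb_step]
      split
      · calc (1 : ℤ) ≤ gsbEncode w i := ih i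
          _ ≤ ∑ t, gsbEncode w t :=
            Finset.single_le_sum (fun t _ => le_trans zero_le_one (ih t)) (Finset.mem_univ i)
      · exact ih i

theorem gsbEncode_unique_max {k : ℕ} (w : List (Fin k)) (hw : w ≠ []) :
    (∀ i, 1 ≤ gsbEncode w i) ∧
    (∀ i, i ≠ w.getLast hw → gsbEncode w i < gsbEncode w (w.getLast hw)) := by
  refine ⟨fun i => gsbEncode_pos w i, fun i hi => ?_⟩
  set j := w.getLast hw with hj
  have hsplit : w.dropLast ++ [j] = w := List.dropLast_append_getLast hw
  rw [← hsplit, gsbEncode_append, gsb_step, gsb_step, if_pos rfl, if_neg hi]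
  set v := gsbEncode w.dropLast with hv
  have h1 : ∑ t, v t = v j + ∑ t ∈ Finset.univ.erase j, v t :=
    (Finset.add_sum_erase _ _ (Finset.mem_univ j)).symm
  have h2 : v i ≤ ∑ t ∈ Finset.univ.erase j, v t :=
    Finset.single_le_sum (fun t _ => le_trans zero_le_one (gsbEncode_pos _ t))
      (Finset.mem_erase.mpr ⟨hi, Finset.mem_univ i⟩)
  have h3 : 1 ≤ v j := gsbEncode_pos _ j
  linarith
end

section
/- The set {(n, 2^n) : n ≥ 0} ⊆ ℕ² is not semilinear, i.e., it is not a finite union of sets of the form {v₀ + c₁v₁ + … + c_rv_r : c_i ∈ ℕ} with v₀,…,v_r ∈ ℕ². -/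
/-!
A linear set `{v₀ + ∑ cᵢ vᵢ}` with some `vᵢ ≠ 0` contains the whole ray `v₀ + ℕ vᵢ`. The graph of
`n ↦ b ^ n` (`b > 1`) contains no ray: three consecutive points `(x, y), (x + a, y + c),
(x + 2a, y + 2c)` on it give `b ^ x + b ^ (x + 2a) = 2 b ^ (x + a)`, forcing `a = 0` by strict
convexity, and then `c = 0`. Hence every linear set inside the graph is a single point, so a
semilinear set inside it is finite, whereas the graph is infinite.
-/

/-- A subset of ℕ² is linear if it has the form
`{v₀ + c₁ • v₁ + … + c_r • v_r : cᵢ ∈ ℕ}`. -/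
def IsLinearSetNat2 (S : Set (ℕ × ℕ)) : Prop :=
  ∃ (v₀ : ℕ × ℕ) (r : ℕ) (v : Fin r → ℕ × ℕ),
    S = {x | ∃ c : Fin r → ℕ, x = v₀ + ∑ i, c i • v i}

/-- A subset of ℕ² is semilinear if it is a finite union of linear sets. -/
def IsSemilinearSetNat2 (S : Set (ℕ × ℕ)) : Prop :=
  ∃ (n : ℕ) (L : Fin n → Set (ℕ × ℕ)), (∀ i, IsLinearSetNat2 (L i)) ∧ S = ⋃ i, L i

theorem Nat.eq_zero_of_pow_add_pow_eq_two_mul_pow {b x a : ℕ} (hb : 1 < b)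
    (h : b ^ x + b ^ (x + 2 * a) = 2 * b ^ (x + a)) : a = 0 := by
  have hcancel : 1 + b ^ a * b ^ a = 2 * b ^ a := by
    refine Nat.eq_of_mul_eq_mul_left (pow_pos (by omega) x : 0 < b ^ x) ?_
    rw [two_mul a, pow_add, pow_add, pow_add] at h
    linarith
  have hone : b ^ a = 1 := by nlinarith
  simpa [Nat.pow_eq_one, hb.ne'] using hone

theorem eq_zero_of_add_smul_mem_graph_pow {b : ℕ} (hb : 1 < b) {u v : ℕ × ℕ}
    (h : ∀ c : ℕ, u + c • v ∈ {p : ℕ × ℕ | ∃ n : ℕ, p = (n, b ^ n)}) : v = 0 := by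
  have hpt (c : ℕ) : u.2 + c * v.2 = b ^ (u.1 + c * v.1) := by
    obtain ⟨n, hn⟩ := h c
    simp only [Prod.ext_iff, Prod.fst_add, Prod.snd_add, Prod.smul_fst, Prod.smul_snd,
      smul_eq_mul] at hn
    rw [hn.1, hn.2]
  have h0 := hpt 0
  have h1 := hpt 1
  have h2 := hpt 2
  simp only [zero_mul, add_zero, one_mul] at h0 h1 h2
  have ha : v.1 = 0 := Nat.eq_zero_of_pow_add_pow_eq_two_mul_pow (x := u.1) hb (by omega)
  rw [ha, add_zero] at h1
  exact Prod.ext ha (by rw [Prod.snd_zero]; omega)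

theorem IsLinearSetNat2.finite {S : Set (ℕ × ℕ)} (hS : IsLinearSetNat2 S)
    (hrays : ∀ u v : ℕ × ℕ, (∀ c : ℕ, u + c • v ∈ S) → v = 0) : S.Finite := by
  obtain ⟨v₀, r, v, rfl⟩ := hS
  have hv (i : Fin r) : v i = 0 :=
    hrays v₀ (v i) fun c => ⟨Pi.single i c, by simp [Pi.single_apply, ite_smul]⟩
  refine (Set.finite_singleton v₀).subset ?_
  rintro x ⟨c, rfl⟩
  simp [hv]

theorem IsSemilinearSetNat2.finite {S : Set (ℕ × ℕ)} (hS : IsSemilinearSetNat2 S)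
    (hrays : ∀ u v : ℕ × ℕ, (∀ c : ℕ, u + c • v ∈ S) → v = 0) : S.Finite := by
  obtain ⟨n, L, hL, rfl⟩ := hS
  exact Set.finite_iUnion fun i => (hL i).finite fun u v hray =>
    hrays u v fun c => Set.mem_iUnion_of_mem i (hray c)

theorem pow_not_semilinear :
    ¬ IsSemilinearSetNat2 {p : ℕ × ℕ | ∃ n : ℕ, p = (n, 2 ^ n)} := by
  intro hS
  have hfinite := hS.finite fun _ _ => eq_zero_of_add_smul_mem_graph_pow one_lt_two
  have hinfinite : Set.Infinite {p : ℕ × ℕ | ∃ n : ℕ, p = (n, 2 ^ n)} :=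
    Set.infinite_of_injective_forall_mem (f := fun n => (n, 2 ^ n))
      (fun _ _ h => congrArg Prod.fst h) fun n => ⟨n, rfl⟩
  exact hinfinite hfinite
end
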